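/- Let $1<p_i<\infty$, $\frac1p=\sum_{i=1}^m\frac1{p_i}$, and let $\sigma_1,\dots,\sigma_m$ be weights. Then $\|\mathcal{M}^d_{\vec\sigma}(\vec f)\|_{L^p(\nu_{\vec\sigma})}\le \prod_{i=1}^m p_i' \|f_i\|_{L^{p_i}(\sigma_i)}$, where $\nu_{\vec\sigma}=\prod_{i=1}^m\sigma_i^{p/p_i}$. -/

import Mathlib

open MeasureTheory ENNReal

noncomputable section

/-- Points of `ℝⁿ`. -/
abbrev Rn (n : ℕ) := Fin n → ℝ

/-- The half-open cube with corner `c` and sidelength `h`. -/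
def cube {n : ℕ} (c : Rn n) (h : ℝ) : Set (Rn n) :=
  Set.univ.pi fun i => Set.Ico (c i) (c i + h)

/-- `Q` is a (half-open, axis-parallel) cube. -/
def IsCube {n : ℕ} (Q : Set (Rn n)) : Prop := ∃ c h, 0 < h ∧ Q = cube c h

/-- The dyadic cube `2^{-k}([0,1)^n + j)` of the standard dyadic grid. -/
def dyadicCube {n : ℕ} (k : ℤ) (j : Fin n → ℤ) : Set (Rn n) :=
  cube (fun i => (j i : ℝ) * (2:ℝ) ^ (-k)) ((2:ℝ) ^ (-k))

/-- `Q` belongs to the standard dyadic grid `𝒟`. -/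
def IsDyadicCube {n : ℕ} (Q : Set (Rn n)) : Prop := ∃ k j, Q = dyadicCube k j

/-- `∫_Q g` of a (nonnegative) real function, as an element of `ℝ≥0∞`. -/
def setInt {n : ℕ} (Q : Set (Rn n)) (g : Rn n → ℝ) : ℝ≥0∞ :=
  ∫⁻ x in Q, ENNReal.ofReal (g x)

/-- The average `(1/|Q|)∫_Q g`. -/
def avg {n : ℕ} (Q : Set (Rn n)) (g : Rn n → ℝ) : ℝ≥0∞ := setInt Q g / volume Q

/-- The weighted average `(1/σ(Q)) ∫_Q f σ`. -/
def wAvg {n : ℕ} (Q : Set (Rn n)) (σ f : Rn n → ℝ) : ℝ≥0∞ :=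
  setInt Q (fun x => f x * σ x) / setInt Q σ

/-- The dyadic weighted multisublinear maximal operator `𝓜^d_{⃗σ}`. -/
def Mdw {n m : ℕ} (σ f : Fin m → Rn n → ℝ) (x : Rn n) : ℝ≥0∞ :=
  ⨆ (Q : Set (Rn n)) (_ : IsDyadicCube Q) (_ : x ∈ Q), ∏ i, wAvg Q (σ i) (f i)

/-- The dyadic weighted maximal operator `M^d_σ`. -/
def Mdw1 {n : ℕ} (σ f : Rn n → ℝ) (x : Rn n) : ℝ≥0∞ :=
  ⨆ (Q : Set (Rn n)) (_ : IsDyadicCube Q) (_ : x ∈ Q), wAvg Q σ f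

/-- The multisublinear maximal operator `𝓜` over all cubes. -/
def MM {n m : ℕ} (f : Fin m → Rn n → ℝ) (x : Rn n) : ℝ≥0∞ :=
  ⨆ (Q : Set (Rn n)) (_ : IsCube Q) (_ : x ∈ Q), ∏ i, avg Q (f i)

/-- The dyadic multisublinear maximal operator `𝓜^d`. -/
def MMd {n m : ℕ} (f : Fin m → Rn n → ℝ) (x : Rn n) : ℝ≥0∞ :=
  ⨆ (Q : Set (Rn n)) (_ : IsDyadicCube Q) (_ : x ∈ Q), ∏ i, avg Q (f i)

/-- The Hardy–Littlewood maximal operator (over all cubes). -/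
def HLM {n : ℕ} (g : Rn n → ℝ) (x : Rn n) : ℝ≥0∞ :=
  ⨆ (Q : Set (Rn n)) (_ : IsCube Q) (_ : x ∈ Q), avg Q g

/-- `(∫ g^p v dx)^{1/p}` for an `ℝ≥0∞`-valued `g`. -/
def nLp {n : ℕ} (p : ℝ) (v : Rn n → ℝ) (g : Rn n → ℝ≥0∞) : ℝ≥0∞ :=
  (∫⁻ x, g x ^ p * ENNReal.ofReal (v x)) ^ (1/p)

/-- The `L^p(v)` norm of a (nonnegative) real function. -/
def nLpR {n : ℕ} (p : ℝ) (v f : Rn n → ℝ) : ℝ≥0∞ :=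
  nLp p v (fun x => ENNReal.ofReal (f x))

/-- The conjugate exponent `q' = q/(q-1)`. -/
def conjExp (q : ℝ) : ℝ := q / (q - 1)

/-- The dual weights `σ_i = w_i^{1-p_i'}`. -/
def dualW {n m : ℕ} (p : Fin m → ℝ) (w : Fin m → Rn n → ℝ) : Fin m → Rn n → ℝ :=
  fun i x => w i x ^ (1 - conjExp (p i))

/-- The geometric average `exp((1/|Q|)∫_Q log g)`, realized (in the extended sense)
as `inf_{r>0} ((1/|Q|)∫_Q g^r)^{1/r}`. -/
def expLogAvg {n : ℕ} (Q : Set (Rn n)) (g : Rn n → ℝ) : ℝ≥0∞ :=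
  ⨅ (r : ℝ) (_ : 0 < r), ((∫⁻ x in Q, ENNReal.ofReal (g x) ^ r) / volume Q) ^ (1/r)

/-- A sparse family of cubes indexed by `ℤ × J`. -/
def IsSparse {n : ℕ} (J : Type) (Q : ℤ → J → Set (Rn n)) : Prop :=
  (∀ (k : ℤ) (j j' : J), j ≠ j' → Q k j ∩ Q k j' = ∅) ∧
  (∀ k : ℤ, (⋃ j, Q (k+1) j) ⊆ ⋃ j, Q k j) ∧
  (∀ (k : ℤ) (j : J), volume ((⋃ j', Q (k+1) j') ∩ Q k j) ≤ volume (Q k j) / 2)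

/-- A general dyadic grid. -/
def IsDyadicGrid {n : ℕ} (G : Set (Set (Rn n))) : Prop :=
  (∀ Q ∈ G, ∃ (k : ℤ) (c : Rn n), Q = cube c ((2:ℝ) ^ k)) ∧
  (∀ Q ∈ G, ∀ R ∈ G, Q ∩ R = Q ∨ Q ∩ R = R ∨ Q ∩ R = ∅) ∧
  (∀ k : ℤ,
    ⋃₀ {Q | Q ∈ G ∧ ∃ c, Q = cube c ((2:ℝ) ^ k)} = Set.univ ∧
    {Q | Q ∈ G ∧ ∃ c, Q = cube c ((2:ℝ) ^ k)}.Pairwise fun Q R => Q ∩ R = ∅)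

/-!
The multilinear operator is dominated pointwise by the product of the linear ones,
`𝓜^d_σ⃗(f⃗) ≤ ∏ M^d_{σ_i} f_i`, so Hölder's inequality with exponents `p_i / p` reduces the claim
to Doob's bound `‖M^d_σ f‖_{L^q(σ)} ≤ q' ‖f‖_{L^q(σ)}`. This bound holds for the dyadic maximal
function of any σ-finite measure `μ`. Dyadic cubes are nested, so the maximal cubes on which the
average of `g` exceeds `t` are disjoint; this gives the weak-type estimate
`t μ{M g > t} ≤ ∫_{M g > t} g`. Integrating it against `q t^{q-2} dt` (layer cake) yields
`‖M g‖_q^q ≤ q' ∫ g (M g)^{q-1}`, and Hölder absorbs the factor `‖M g‖_q^{q-1}` once it is finite,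
which is arranged by approximating `g` from below by bounded functions of finite integral.
-/

open Set

section FamilyMaximal

variable {α : Type*} [MeasurableSpace α]

def familyMaximal (𝒞 : Set (Set α)) (μ : Measure α) (g : α → ℝ≥0∞) (x : α) : ℝ≥0∞ :=
  ⨆ Q ∈ 𝒞, ⨆ (_ : x ∈ Q), ⨍⁻ y in Q, g y ∂μ

variable {𝒞 : Set (Set α)} {μ : Measure α}

lemma setLAverage_le_familyMaximal {Q : Set α} (hQ : Q ∈ 𝒞) {x : α} (hx : x ∈ Q)
    (g : α → ℝ≥0∞) : ⨍⁻ y in Q, g y ∂μ ≤ familyMaximal 𝒞 μ g x :=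
  le_iSup₂_of_le Q hQ (le_iSup_of_le hx le_rfl)

lemma familyMaximal_mono_family {𝒞' : Set (Set α)} (h : 𝒞 ⊆ 𝒞') (g : α → ℝ≥0∞) (x : α) :
    familyMaximal 𝒞 μ g x ≤ familyMaximal 𝒞' μ g x :=
  iSup₂_le fun _ hQ => iSup_le fun hx => setLAverage_le_familyMaximal (h hQ) hx g

lemma familyMaximal_mono {g h : α → ℝ≥0∞} (hgh : g ≤ h) (x : α) :
    familyMaximal 𝒞 μ g x ≤ familyMaximal 𝒞 μ h x :=
  iSup₂_mono fun _ _ => iSup_mono fun _ => setLAverage_mono_ae _ (ae_of_all _ hgh)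

lemma familyMaximal_le_of_le {g : α → ℝ≥0∞} {c : ℝ≥0∞} (hgc : ∀ x, g x ≤ c) (x : α) :
    familyMaximal 𝒞 μ g x ≤ c :=
  iSup₂_le fun Q _ => iSup_le fun _ =>
    (setLAverage_le_essSup Q g).trans (essSup_le_of_ae_le c (ae_of_all _ hgc))

lemma measurable_familyMaximal (h𝒞 : 𝒞.Countable) (h𝒞m : ∀ Q ∈ 𝒞, MeasurableSet Q)
    (g : α → ℝ≥0∞) : Measurable (familyMaximal 𝒞 μ g) := by
  refine Measurable.biSup _ h𝒞 fun Q hQ => ?_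
  classical
  simp only [iSup_eq_if]
  exact Measurable.ite (h𝒞m Q hQ) measurable_const measurable_const

lemma familyMaximal_iSup {g : ℕ → α → ℝ≥0∞} (hg : ∀ m, Measurable (g m)) (hmono : Monotone g)
    (x : α) :
    familyMaximal 𝒞 μ (fun y => ⨆ m, g m y) x = ⨆ m, familyMaximal 𝒞 μ (g m) x := by
  simp only [familyMaximal, setLAverage_eq, lintegral_iSup hg hmono, ENNReal.iSup_div]
  rw [iSup_comm]
  simp only [iSup_comm (ι' := ℕ)]

lemma mul_le_setLIntegral_of_lt_setLAverage {Q : Set α} {g : α → ℝ≥0∞} {t : ℝ≥0∞}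
    (h : t < ⨍⁻ y in Q, g y ∂μ) : t * μ Q ≤ ∫⁻ y in Q, g y ∂μ := by
  rw [setLAverage_eq] at h
  rcases eq_or_ne (μ Q) 0 with h0 | h0
  · simp [h0]
  rcases eq_or_ne (μ Q) ∞ with htop | htop
  · simp [htop] at h
  exact (ENNReal.le_div_iff_mul_le (Or.inl h0) (Or.inl htop)).1 h.le

theorem mul_meas_lt_familyMaximal_le (h𝒞 : 𝒞.Countable) (h𝒞m : ∀ Q ∈ 𝒞, MeasurableSet Q)
    (hnest : ∀ Q ∈ 𝒞, ∀ Q' ∈ 𝒞, (Q ∩ Q').Nonempty → Q ⊆ Q' ∨ Q' ⊆ Q)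
    (hfin : ∀ Q ∈ 𝒞, {Q' ∈ 𝒞 | Q ⊆ Q'}.Finite) (g : α → ℝ≥0∞) (t : ℝ≥0∞) :
    t * μ {x | t < familyMaximal 𝒞 μ g x} ≤
      ∫⁻ x in {x | t < familyMaximal 𝒞 μ g x}, g x ∂μ := by
  set P : Set α → Prop := fun Q => Q ∈ 𝒞 ∧ t < ⨍⁻ y in Q, g y ∂μ
  set 𝒮 := {Q | Maximal P Q}
  have h𝒮 : 𝒮.Countable := h𝒞.mono fun Q hQ => hQ.prop.1
  have cover : {x | t < familyMaximal 𝒞 μ g x} ⊆ ⋃ Q ∈ 𝒮, Q := by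
    intro x hx
    simp only [mem_ofPred_eq, familyMaximal, lt_iSup_iff] at hx
    obtain ⟨Q, hQ, hxQ, htQ⟩ := hx
    obtain ⟨Q', hQQ', hmax⟩ := ((hfin Q hQ).subset (t := {Q' | P Q' ∧ Q ⊆ Q'})
      fun Q' hQ' => ⟨hQ'.1.1, hQ'.2⟩).exists_le_maximal ⟨⟨hQ, htQ⟩, subset_rfl⟩
    refine mem_biUnion (x := Q') ⟨hmax.prop.1, fun R hR hQ'R => ?_⟩ (hQQ' hxQ)
    exact hmax.2 ⟨hR, hQQ'.trans hQ'R⟩ hQ'R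
  have inside : (⋃ Q ∈ 𝒮, Q) ⊆ {x | t < familyMaximal 𝒞 μ g x} :=
    iUnion₂_subset fun Q hQ x hx =>
      hQ.prop.2.trans_le (setLAverage_le_familyMaximal hQ.prop.1 hx g)
  have disj : 𝒮.PairwiseDisjoint id := by
    intro Q hQ Q' hQ' hne
    by_contra hmeet
    rcases hnest Q hQ.prop.1 Q' hQ'.prop.1 (not_disjoint_iff_nonempty_inter.1 hmeet) with h | h
    · exact hne (hQ.eq_of_subset hQ'.prop h)
    · exact hne (hQ'.eq_of_subset hQ.prop h).symm
  calc t * μ {x | t < familyMaximal 𝒞 μ g x}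
      ≤ t * ∑' Q : 𝒮, μ Q := by
        gcongr
        exact (measure_mono cover).trans (measure_biUnion_le μ h𝒮 id)
    _ = ∑' Q : 𝒮, t * μ Q := ENNReal.tsum_mul_left.symm
    _ ≤ ∑' Q : 𝒮, ∫⁻ y in Q, g y ∂μ :=
        ENNReal.tsum_le_tsum fun Q => mul_le_setLIntegral_of_lt_setLAverage Q.2.prop.2
    _ = ∫⁻ y in ⋃ Q ∈ 𝒮, Q, g y ∂μ :=
        (lintegral_biUnion h𝒮 (fun Q hQ => h𝒞m Q hQ.prop.1) disj g).symm
    _ ≤ ∫⁻ x in {x | t < familyMaximal 𝒞 μ g x}, g x ∂μ := lintegral_mono_set inside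

end FamilyMaximal

section Dyadic

variable {n : ℕ}

def dyadicIndex (k : ℤ) (x : Rn n) : Fin n → ℤ := fun i => ⌊x i * 2 ^ k⌋

lemma mem_dyadicCube_iff {k : ℤ} {j : Fin n → ℤ} {x : Rn n} :
    x ∈ dyadicCube k j ↔ dyadicIndex k x = j := by
  have h2k : (0 : ℝ) < 2 ^ k := zpow_pos two_pos k
  simp only [dyadicCube, cube, mem_univ_pi, mem_Ico, funext_iff, dyadicIndex, Int.floor_eq_iff]
  refine forall_congr' fun i => and_congr ?_ ?_
  · rw [zpow_neg, ← div_eq_mul_inv, div_le_iff₀ h2k]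
  · rw [← add_one_mul, zpow_neg, ← div_eq_mul_inv, lt_div_iff₀ h2k]

lemma dyadicIndex_eq_div {k k' : ℤ} (hk : k ≤ k') (x : Rn n) (i : Fin n) :
    dyadicIndex k x i = dyadicIndex k' x i / 2 ^ (k' - k).toNat := by
  have hpow : (2 : ℝ) ^ k' = 2 ^ k * ((2 ^ (k' - k).toNat : ℕ) : ℝ) := by
    rw [Nat.cast_pow, Nat.cast_ofNat, ← zpow_natCast, Int.toNat_of_nonneg (by omega),
      ← zpow_add₀ two_ne_zero, add_sub_cancel]
  have := Int.floor_div_natCast (x i * 2 ^ k') (2 ^ (k' - k).toNat)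
  rw [hpow, ← mul_assoc, mul_div_cancel_right₀ _ (by positivity)] at this
  simpa [dyadicIndex, hpow, mul_assoc] using this

lemma dyadicCube_subset_of_le {k k' : ℤ} (hk : k ≤ k') {j' : Fin n → ℤ} {x : Rn n}
    (hx : x ∈ dyadicCube k' j') : dyadicCube k' j' ⊆ dyadicCube k (dyadicIndex k x) := by
  intro y hy
  rw [mem_dyadicCube_iff] at hx hy ⊢
  funext i
  rw [dyadicIndex_eq_div hk, dyadicIndex_eq_div hk, hx, hy]

lemma dyadicCube_nonempty (k : ℤ) (j : Fin n → ℤ) : (dyadicCube k j).Nonempty :=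
  ⟨_, fun _ _ => ⟨le_rfl, lt_add_of_pos_right _ (zpow_pos two_pos _)⟩⟩

lemma measurableSet_dyadicCube (k : ℤ) (j : Fin n → ℤ) : MeasurableSet (dyadicCube k j) :=
  MeasurableSet.univ_pi fun _ => measurableSet_Ico

lemma dyadicCube_subset_or_subset {k k' : ℤ} {j j' : Fin n → ℤ}
    (h : (dyadicCube k j ∩ dyadicCube k' j').Nonempty) :
    dyadicCube k j ⊆ dyadicCube k' j' ∨ dyadicCube k' j' ⊆ dyadicCube k j := by
  obtain ⟨x, hx, hx'⟩ := h
  rcases le_total k k' with hk | hk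
  · right
    simpa only [mem_dyadicCube_iff.1 hx] using dyadicCube_subset_of_le hk hx'
  · left
    simpa only [mem_dyadicCube_iff.1 hx'] using dyadicCube_subset_of_le hk hx

lemma countable_setOf_isDyadicCube : {Q : Set (Rn n) | IsDyadicCube Q}.Countable :=
  (countable_range fun p : ℤ × (Fin n → ℤ) => dyadicCube p.1 p.2).mono
    fun _ ⟨k, j, hQ⟩ => mem_range.2 ⟨(k, j), hQ.symm⟩

lemma IsDyadicCube.measurableSet {Q : Set (Rn n)} (hQ : IsDyadicCube Q) : MeasurableSet Q := by
  obtain ⟨k, j, rfl⟩ := hQ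
  exact measurableSet_dyadicCube k j

-- Bounding the scale from above gives every cube finitely many ancestors, so maximal cubes exist.
def dyadicCubesGe (N : ℤ) : Set (Set (Rn n)) := {Q | ∃ k ≥ N, ∃ j, Q = dyadicCube k j}

lemma dyadicCubesGe_subset (N : ℤ) : dyadicCubesGe N ⊆ {Q : Set (Rn n) | IsDyadicCube Q} :=
  by rintro _ ⟨k, -, j, hQ⟩; exact ⟨k, j, hQ⟩

lemma dyadicCubesGe_antitone : Antitone (dyadicCubesGe : ℤ → Set (Set (Rn n))) :=
  fun _ _ hN _ ⟨k, hk, j, hQ⟩ => ⟨k, hN.trans hk, j, hQ⟩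

lemma iUnion_dyadicCubesGe :
    ⋃ N : ℕ, dyadicCubesGe (-N : ℤ) = {Q : Set (Rn n) | IsDyadicCube Q} := by
  refine (iUnion_subset fun N => dyadicCubesGe_subset _).antisymm ?_
  rintro Q ⟨k, j, hQ⟩
  exact mem_iUnion.2 ⟨k.natAbs, k, by omega, j, hQ⟩

lemma finite_superset_dyadicCubesGe {N : ℤ} {Q : Set (Rn n)} (hQ : Q ∈ dyadicCubesGe N) :
    {Q' ∈ dyadicCubesGe N | Q ⊆ Q'}.Finite := by
  obtain ⟨k, hk, j, rfl⟩ := hQ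
  obtain ⟨c, hc⟩ := dyadicCube_nonempty k j
  refine ((finite_Icc N k).image fun k' => dyadicCube k' (dyadicIndex k' c)).subset ?_
  rintro _ ⟨⟨k', hk', j', rfl⟩, hsub⟩
  have hj' : dyadicIndex k' c = j' := mem_dyadicCube_iff.1 (hsub hc)
  rcases le_total k' k with hkk | hkk
  · exact ⟨k', ⟨hk', hkk⟩, congrArg (dyadicCube k') hj'⟩
  · refine ⟨k, ⟨hk, le_rfl⟩, ?_⟩
    have hsub' := dyadicCube_subset_of_le hkk (hsub hc)
    show dyadicCube k (dyadicIndex k c) = _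
    rw [mem_dyadicCube_iff.1 hc] at hsub' ⊢
    exact hsub.antisymm hsub'

theorem mul_meas_lt_familyMaximal_dyadicCubesGe_le (μ : Measure (Rn n)) (N : ℤ)
    (g : Rn n → ℝ≥0∞) (t : ℝ≥0∞) :
    t * μ {x | t < familyMaximal (dyadicCubesGe N) μ g x} ≤
      ∫⁻ x in {x | t < familyMaximal (dyadicCubesGe N) μ g x}, g x ∂μ := by
  refine mul_meas_lt_familyMaximal_le (countable_setOf_isDyadicCube.mono (dyadicCubesGe_subset N))
    (fun Q hQ => (dyadicCubesGe_subset N hQ).measurableSet) ?_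
    (fun Q hQ => finite_superset_dyadicCubesGe hQ) g t
  rintro _ ⟨k, -, j, rfl⟩ _ ⟨k', -, j', rfl⟩
  exact dyadicCube_subset_or_subset

def dyadicMaximal (μ : Measure (Rn n)) (g : Rn n → ℝ≥0∞) : Rn n → ℝ≥0∞ :=
  familyMaximal {Q | IsDyadicCube Q} μ g

lemma measurable_dyadicMaximal (μ : Measure (Rn n)) (g : Rn n → ℝ≥0∞) :
    Measurable (dyadicMaximal μ g) :=
  measurable_familyMaximal countable_setOf_isDyadicCube (fun _ => IsDyadicCube.measurableSet) g

lemma dyadicMaximal_eq_iSup (μ : Measure (Rn n)) (g : Rn n → ℝ≥0∞) (x : Rn n) :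
    dyadicMaximal μ g x = ⨆ N : ℕ, familyMaximal (dyadicCubesGe (-N : ℤ)) μ g x := by
  rw [dyadicMaximal, familyMaximal, ← iUnion_dyadicCubesGe, iSup_iUnion]
  rfl

theorem mul_meas_lt_dyadicMaximal_le (μ : Measure (Rn n)) (g : Rn n → ℝ≥0∞) (t : ℝ≥0∞) :
    t * μ {x | t < dyadicMaximal μ g x} ≤ ∫⁻ x in {x | t < dyadicMaximal μ g x}, g x ∂μ := by
  set S : ℕ → Set (Rn n) := fun N => {x | t < familyMaximal (dyadicCubesGe (-N : ℤ)) μ g x}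
  have hset : {x | t < dyadicMaximal μ g x} = ⋃ N, S N := by
    ext x
    simp only [S, mem_ofPred_eq, mem_iUnion, dyadicMaximal_eq_iSup, lt_iSup_iff]
  have hmono : Monotone S := fun N N' hN x hx => hx.trans_le <|
    familyMaximal_mono_family (dyadicCubesGe_antitone (by omega)) g x
  rw [hset, hmono.directed_le.measure_iUnion, ENNReal.mul_iSup]
  exact iSup_le fun N => (mul_meas_lt_familyMaximal_dyadicCubesGe_le μ _ g t).trans
    (lintegral_mono_set (subset_iUnion S N))

end Dyadic

section StrongType

variable {α : Type*} [MeasurableSpace α] {μ : Measure α}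

theorem lintegral_rpow_le_mul_lintegral_mul_rpow {T g : α → ℝ≥0∞} (hT : Measurable T)
    (hTfin : ∀ x, T x ≠ ∞) (hg : Measurable g) {q : ℝ} (hq : 1 < q)
    (hweak : ∀ t, t * μ {x | t < T x} ≤ ∫⁻ x in {x | t < T x}, g x ∂μ) :
    ∫⁻ x, T x ^ q ∂μ ≤ ENNReal.ofReal (q / (q - 1)) * ∫⁻ x, g x * T x ^ (q - 1) ∂μ := by
  have hq1 : 0 < q - 1 := by linarith
  set F : α → ℝ := fun x => (T x).toReal
  have hF : AEMeasurable F (μ.withDensity g) := hT.ennreal_toReal.aemeasurable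
  have hT_eq : ∀ r : ℝ, 0 ≤ r → ∀ x, T x ^ r = ENNReal.ofReal (F x ^ r) := fun r hr x => by
    rw [← ENNReal.ofReal_rpow_of_nonneg toReal_nonneg hr, ofReal_toReal (hTfin x)]
  have hlevel : ∀ t : ℝ, 0 < t → {x | t < F x} = {x | ENNReal.ofReal t < T x} := fun t ht => by
    ext x
    simp only [mem_ofPred_eq, F, ENNReal.ofReal_lt_iff_lt_toReal ht.le (hTfin x)]
  set J := ∫⁻ t in Ioi 0, μ.withDensity g {x | t < F x} * ENNReal.ofReal (t ^ (q - 1 - 1))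
  have hJ : ∫⁻ x, T x ^ (q - 1) ∂μ.withDensity g = ENNReal.ofReal (q - 1) * J := by
    simp only [hT_eq (q - 1) hq1.le, J]
    exact lintegral_rpow_eq_lintegral_meas_lt_mul _ (ae_of_all _ fun _ => toReal_nonneg) hF hq1
  -- Layer cake for `μ` and for `μ.withDensity g`; the weak-type bound compares the level sets.
  calc ∫⁻ x, T x ^ q ∂μ
      = ENNReal.ofReal q * ∫⁻ t in Ioi 0, μ {x | t < F x} * ENNReal.ofReal (t ^ (q - 1)) := by
        simp only [hT_eq q (by linarith)]
        exact lintegral_rpow_eq_lintegral_meas_lt_mul _ (ae_of_all _ fun _ => toReal_nonneg)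
          hT.ennreal_toReal.aemeasurable (by linarith)
    _ ≤ ENNReal.ofReal q * J := by
        gcongr ENNReal.ofReal q * ?_
        refine setLIntegral_mono' measurableSet_Ioi fun t (ht : 0 < t) => ?_
        have hsplit : ENNReal.ofReal (t ^ (q - 1)) =
            ENNReal.ofReal t * ENNReal.ofReal (t ^ (q - 1 - 1)) := by
          rw [← ENNReal.ofReal_mul ht.le, ← Real.rpow_one_add' ht.le (by linarith)]
          ring_nf
        rw [hsplit, ← mul_assoc, mul_comm (μ _), hlevel t ht,
          withDensity_apply _ (measurableSet_lt measurable_const hT)]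
        gcongr
        exact hweak _
    _ = ENNReal.ofReal (q / (q - 1)) * (ENNReal.ofReal (q - 1) * J) := by
        rw [← mul_assoc, ← ENNReal.ofReal_mul (by positivity), div_mul_cancel₀ _ hq1.ne']
    _ = ENNReal.ofReal (q / (q - 1)) * ∫⁻ x, g x * T x ^ (q - 1) ∂μ := by
        rw [← hJ, lintegral_withDensity_eq_lintegral_mul _ hg (hT.pow_const _)]
        rfl

theorem lintegral_rpow_le_of_le_mul_lintegral_mul_rpow {T g : α → ℝ≥0∞} (hT : AEMeasurable T μ)
    (hg : AEMeasurable g μ) {q : ℝ} (hq : 1 < q) {C : ℝ≥0∞} (hfin : ∫⁻ x, T x ^ q ∂μ ≠ ∞)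
    (h : ∫⁻ x, T x ^ q ∂μ ≤ C * ∫⁻ x, g x * T x ^ (q - 1) ∂μ) :
    ∫⁻ x, T x ^ q ∂μ ≤ C ^ q * ∫⁻ x, g x ^ q ∂μ := by
  have hq0 : 0 < q := by linarith
  set I := ∫⁻ x, T x ^ q ∂μ
  set G := ∫⁻ x, g x ^ q ∂μ
  rcases eq_or_ne I 0 with hI0 | hI0
  · rw [hI0]
    exact zero_le
  have hHolder : ∫⁻ x, g x * T x ^ (q - 1) ∂μ ≤ G ^ (1 / q) * I ^ ((q - 1) / q) := by
    have hpq := Real.HolderConjugate.conjExponent hq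
    have hexp : ∀ x, (T x ^ (q - 1)) ^ Real.conjExponent q = T x ^ q := fun x => by
      rw [← ENNReal.rpow_mul, Real.conjExponent, mul_div_cancel₀ _ (by linarith)]
    have := ENNReal.lintegral_mul_le_Lp_mul_Lq μ hpq hg (hT.pow_const (q - 1))
    simp only [Pi.mul_apply, hexp] at this
    rwa [Real.conjExponent, one_div_div] at this
  have hsplit : I ^ (1 / q) * I ^ ((q - 1) / q) = I := by
    rw [← ENNReal.rpow_add _ _ hI0 hfin, ← add_div, add_sub_cancel, div_self hq0.ne',
      ENNReal.rpow_one]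
  have hroot : I ^ (1 / q) ≤ C * G ^ (1 / q) := by
    refine (ENNReal.mul_le_mul_iff_left (c := I ^ ((q - 1) / q)) ?_ ?_).1 ?_
    · exact (ENNReal.rpow_pos (pos_iff_ne_zero.2 hI0) hfin).ne'
    · exact ENNReal.rpow_ne_top_of_nonneg (by bound) hfin
    · rw [hsplit, mul_assoc]
      exact h.trans (by gcongr)
  calc I = (I ^ (1 / q)) ^ q := by
        rw [← ENNReal.rpow_mul, one_div_mul_cancel hq0.ne', ENNReal.rpow_one]
    _ ≤ (C * G ^ (1 / q)) ^ q := by gcongr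
    _ = C ^ q * G := by
      rw [ENNReal.mul_rpow_of_nonneg _ _ hq0.le, ← ENNReal.rpow_mul, one_div_mul_cancel hq0.ne',
        ENNReal.rpow_one]

end StrongType

lemma exists_monotone_bounded_approx {α : Type*} [MeasurableSpace α] (μ : Measure α)
    [SigmaFinite μ] {g : α → ℝ≥0∞} (hg : Measurable g) :
    ∃ G : ℕ → α → ℝ≥0∞, Monotone G ∧ (∀ m, Measurable (G m)) ∧ (∀ m x, G m x ≤ m) ∧
      (∀ m, ∫⁻ x, G m x ∂μ ≠ ∞) ∧ ∀ x, ⨆ m, G m x = g x := by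
  refine ⟨fun m => (spanningSets μ m).indicator fun x => min (g x) m, ?_, fun m => ?_,
    fun m => indicator_le fun _ _ => min_le_right _ _, fun m => ?_, fun x => ?_⟩
  · intro m m' hm x
    calc (spanningSets μ m).indicator (fun x => min (g x) m) x
        ≤ (spanningSets μ m').indicator (fun x => min (g x) m) x :=
          indicator_le_indicator_of_subset (monotone_spanningSets μ hm) (fun _ => zero_le) x
      _ ≤ (spanningSets μ m').indicator (fun x => min (g x) m') x := by
          gcongr
  · exact (hg.min measurable_const).indicator (measurableSet_spanningSets μ m)
  · refine ne_top_of_le_ne_top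
      (mul_ne_top (natCast_ne_top m) (measure_spanningSets_lt_top μ m).ne) ?_
    rw [← lintegral_indicator_const (measurableSet_spanningSets μ m)]
    exact lintegral_mono fun x => indicator_le_indicator (min_le_right _ _)
  · refine le_antisymm (iSup_le fun m => (indicator_le_self _ _ x).trans (min_le_left _ _))
      (le_of_forall_lt fun b hb => ?_)
    obtain ⟨N, hN⟩ := ENNReal.exists_nat_gt hb.ne_top
    have hx : x ∈ spanningSets μ (max N (spanningSetsIndex μ x)) :=
      monotone_spanningSets μ (le_max_right _ _) (mem_spanningSetsIndex μ x)
    refine lt_iSup_iff.2 ⟨max N (spanningSetsIndex μ x), ?_⟩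
    dsimp only
    rw [indicator_of_mem hx]
    exact lt_min hb (hN.trans_le (Nat.cast_le.2 (le_max_left _ _)))

section DyadicStrongType

variable {n : ℕ} {μ : Measure (Rn n)}

theorem lintegral_dyadicMaximal_rpow_le_of_le {g : Rn n → ℝ≥0∞} (hg : Measurable g) {c : ℝ≥0∞}
    (hc : c ≠ ∞) (hgc : ∀ x, g x ≤ c) (hgi : ∫⁻ x, g x ∂μ ≠ ∞) {q : ℝ} (hq : 1 < q) :
    ∫⁻ x, dyadicMaximal μ g x ^ q ∂μ ≤ ENNReal.ofReal (q / (q - 1)) ^ q * ∫⁻ x, g x ^ q ∂μ := by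
  have hMc : ∀ x, dyadicMaximal μ g x ≤ c := familyMaximal_le_of_le hgc
  have hM := measurable_dyadicMaximal μ g
  have hineq := lintegral_rpow_le_mul_lintegral_mul_rpow hM
    (fun x => ne_top_of_le_ne_top hc (hMc x)) hg hq (mul_meas_lt_dyadicMaximal_le μ g)
  refine lintegral_rpow_le_of_le_mul_lintegral_mul_rpow hM.aemeasurable hg.aemeasurable hq
    (ne_top_of_le_ne_top (mul_ne_top ofReal_ne_top ?_) hineq) hineq
  refine ne_top_of_le_ne_top ?_ (lintegral_mono fun x =>
    mul_le_mul_right (ENNReal.rpow_le_rpow (hMc x) (by linarith : (0 : ℝ) ≤ q - 1)) (g x))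
  rw [lintegral_mul_const' _ _ (ENNReal.rpow_ne_top_of_nonneg (by linarith) hc)]
  exact mul_ne_top hgi (ENNReal.rpow_ne_top_of_nonneg (by linarith) hc)

theorem lintegral_dyadicMaximal_rpow_le [SigmaFinite μ] {g : Rn n → ℝ≥0∞} (hg : Measurable g)
    {q : ℝ} (hq : 1 < q) :
    ∫⁻ x, dyadicMaximal μ g x ^ q ∂μ ≤ ENNReal.ofReal (q / (q - 1)) ^ q * ∫⁻ x, g x ^ q ∂μ := by
  have hq0 : 0 < q := by linarith
  obtain ⟨G, hGmono, hGm, hGc, hGi, hGsup⟩ := exists_monotone_bounded_approx μ hg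
  have hMsup : ∀ x, dyadicMaximal μ g x ^ q = ⨆ m, dyadicMaximal μ (G m) x ^ q := fun x => by
    have hg_eq : g = fun y => ⨆ m, G m y := funext fun y => (hGsup y).symm
    rw [hg_eq, dyadicMaximal, familyMaximal_iSup hGm hGmono]
    exact (ENNReal.orderIsoRpow q hq0).map_iSup _
  have hMmono : Monotone fun m x => dyadicMaximal μ (G m) x ^ q := fun m m' hm x =>
    ENNReal.rpow_le_rpow (familyMaximal_mono (hGmono hm) x) hq0.le
  rw [lintegral_congr hMsup,
    lintegral_iSup (fun m => (measurable_dyadicMaximal μ _).pow_const q) hMmono]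
  refine iSup_le fun m => (lintegral_dyadicMaximal_rpow_le_of_le (hGm m) (natCast_ne_top m)
    (hGc m) (hGi m) hq).trans ?_
  gcongr with x
  exact (le_iSup (fun m => G m x) m).trans_eq (hGsup x)

end DyadicStrongType

theorem lintegral_prod_rpow_mul_le {α ι : Type*} [MeasurableSpace α] {μ : Measure α} [Fintype ι]
    {u w : ι → α → ℝ≥0∞} (hu : ∀ i, AEMeasurable (u i) μ) (hw : ∀ i, AEMeasurable (w i) μ)
    {p : ι → ℝ} (hp : ∀ i, 0 < p i) {r : ℝ} (hr : 0 < r) (hpr : 1 / r = ∑ i, 1 / p i) :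
    (∫⁻ x, (∏ i, u i x) ^ r * ∏ i, w i x ^ (r / p i) ∂μ) ^ (1 / r) ≤
      ∏ i, (∫⁻ x, u i x ^ p i * w i x ∂μ) ^ (1 / p i) := by
  have hsum : ∑ i, r / p i = 1 := by
    simp only [div_eq_mul_one_div r, ← Finset.mul_sum, ← hpr]
    exact mul_one_div_cancel hr.ne'
  have hpt : ∀ x, (∏ i, u i x) ^ r * ∏ i, w i x ^ (r / p i) =
      ∏ i, (u i x ^ p i * w i x) ^ (r / p i) := fun x => by
    rw [← ENNReal.prod_rpow_of_nonneg hr.le, ← Finset.prod_mul_distrib]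
    refine Finset.prod_congr rfl fun i _ => ?_
    rw [ENNReal.mul_rpow_of_nonneg _ _ (div_pos hr (hp i)).le, ← ENNReal.rpow_mul,
      mul_div_cancel₀ _ (hp i).ne']
  calc (∫⁻ x, (∏ i, u i x) ^ r * ∏ i, w i x ^ (r / p i) ∂μ) ^ (1 / r)
      = (∫⁻ x, ∏ i, (u i x ^ p i * w i x) ^ (r / p i) ∂μ) ^ (1 / r) := by simp only [hpt]
    _ ≤ (∏ i, (∫⁻ x, u i x ^ p i * w i x ∂μ) ^ (r / p i)) ^ (1 / r) := by
        gcongr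
        exact ENNReal.lintegral_prod_norm_pow_le _ (fun i _ => ((hu i).pow_const _).mul (hw i))
          hsum fun i _ => (div_pos hr (hp i)).le
    _ = ∏ i, (∫⁻ x, u i x ^ p i * w i x ∂μ) ^ (1 / p i) := by
        rw [← ENNReal.prod_rpow_of_nonneg (one_div_pos.2 hr).le]
        refine Finset.prod_congr rfl fun i _ => ?_
        rw [← ENNReal.rpow_mul]
        congr 1
        field_simp

section Weighted

variable {n : ℕ} {σ f : Rn n → ℝ}

lemma wAvg_eq_setLAverage (hσ0 : ∀ x, 0 ≤ σ x) (hσm : Measurable σ) {Q : Set (Rn n)}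
    (hQ : MeasurableSet Q) :
    wAvg Q σ f =
      ⨍⁻ x in Q, ENNReal.ofReal (f x) ∂volume.withDensity fun x => ENNReal.ofReal (σ x) := by
  rw [setLAverage_eq, withDensity_apply _ hQ, wAvg, setInt, setInt, restrict_withDensity hQ,
    lintegral_withDensity_eq_lintegral_mul_non_measurable _ hσm.ennreal_ofReal
      (ae_of_all _ fun _ => ofReal_lt_top)]
  simp only [Pi.mul_apply, mul_comm (f _), ENNReal.ofReal_mul (hσ0 _)]

lemma Mdw1_eq_dyadicMaximal (hσ0 : ∀ x, 0 ≤ σ x) (hσm : Measurable σ) :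
    Mdw1 σ f = dyadicMaximal (volume.withDensity fun x => ENNReal.ofReal (σ x))
      fun x => ENNReal.ofReal (f x) := by
  funext x
  refine iSup_congr fun Q => iSup_congr fun hQ => ?_
  rw [wAvg_eq_setLAverage hσ0 hσm hQ.measurableSet]

lemma nLp_eq_lintegral_withDensity (p : ℝ) {v : Rn n → ℝ} (hv : Measurable v) (g : Rn n → ℝ≥0∞) :
    nLp p v g = (∫⁻ x, g x ^ p ∂volume.withDensity fun x => ENNReal.ofReal (v x)) ^ (1 / p) := by
  rw [nLp, lintegral_withDensity_eq_lintegral_mul_non_measurable _ hv.ennreal_ofReal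
    (ae_of_all _ fun _ => ofReal_lt_top)]
  simp only [Pi.mul_apply, mul_comm]

theorem nLp_Mdw1_le (hσ0 : ∀ x, 0 ≤ σ x) (hσm : Measurable σ) (hfm : Measurable f) {p : ℝ}
    (hp : 1 < p) : nLp p σ (Mdw1 σ f) ≤ ENNReal.ofReal (conjExp p) * nLpR p σ f := by
  have hp0 : 0 < p := by linarith
  rw [nLpR, nLp_eq_lintegral_withDensity p hσm, nLp_eq_lintegral_withDensity p hσm,
    Mdw1_eq_dyadicMaximal hσ0 hσm, conjExp]
  calc _ ≤ (ENNReal.ofReal (p / (p - 1)) ^ p *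
        ∫⁻ x, ENNReal.ofReal (f x) ^ p ∂volume.withDensity fun x => ENNReal.ofReal (σ x)) ^
          (1 / p) := by
        gcongr
        exact lintegral_dyadicMaximal_rpow_le hfm.ennreal_ofReal hp
    _ = _ := by
        rw [ENNReal.mul_rpow_of_nonneg _ _ (one_div_pos.2 hp0).le, ← ENNReal.rpow_mul,
          mul_one_div_cancel hp0.ne', ENNReal.rpow_one]

lemma measurable_Mdw1 (hσ0 : ∀ x, 0 ≤ σ x) (hσm : Measurable σ) : Measurable (Mdw1 σ f) := by
  rw [Mdw1_eq_dyadicMaximal hσ0 hσm]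
  exact measurable_dyadicMaximal _ _

lemma Mdw_le_prod_Mdw1 {m : ℕ} (σ f : Fin m → Rn n → ℝ) (x : Rn n) :
    Mdw σ f x ≤ ∏ i, Mdw1 (σ i) (f i) x :=
  iSup₂_le fun Q hQ => iSup_le fun hx =>
    Finset.prod_le_prod' fun _ _ => le_iSup₂_of_le Q hQ (le_iSup_of_le hx le_rfl)

end Weighted

theorem stmt3_general {n m : ℕ} (hm : 0 < m) (p : Fin m → ℝ) (pp : ℝ)
    (hp : ∀ i, 1 < p i) (hpp : 1 / pp = ∑ i, 1 / p i)
    (σ : Fin m → Rn n → ℝ) (hσ0 : ∀ i x, 0 ≤ σ i x) (hσm : ∀ i, Measurable (σ i))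
    (f : Fin m → Rn n → ℝ) (hfm : ∀ i, Measurable (f i)) :
    nLp pp (fun x => ∏ i, σ i x ^ (pp / p i)) (Mdw σ f) ≤
      ∏ i, ENNReal.ofReal (conjExp (p i)) * nLpR (p i) (σ i) (f i) := by
  have hp0 : ∀ i, 0 < p i := fun i => one_pos.trans (hp i)
  have hpp0 : 0 < pp := by
    have : Nonempty (Fin m) := Fin.pos_iff_nonempty.1 hm
    exact one_div_pos.1 <|
      hpp ▸ Finset.sum_pos (fun i _ => one_div_pos.2 (hp0 i)) Finset.univ_nonempty
  have hweight : ∀ x, ENNReal.ofReal (∏ i, σ i x ^ (pp / p i)) =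
      ∏ i, ENNReal.ofReal (σ i x) ^ (pp / p i) := fun x => by
    rw [ENNReal.ofReal_prod_of_nonneg fun i _ => Real.rpow_nonneg (hσ0 i x) _]
    exact Finset.prod_congr rfl fun i _ =>
      (ENNReal.ofReal_rpow_of_nonneg (hσ0 i x) (div_pos hpp0 (hp0 i)).le).symm
  calc nLp pp (fun x => ∏ i, σ i x ^ (pp / p i)) (Mdw σ f)
      ≤ (∫⁻ x, (∏ i, Mdw1 (σ i) (f i) x) ^ pp *
          ∏ i, ENNReal.ofReal (σ i x) ^ (pp / p i)) ^ (1 / pp) := by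
        refine ENNReal.rpow_le_rpow (lintegral_mono fun x => ?_) (one_div_pos.2 hpp0).le
        rw [hweight]
        gcongr
        exact Mdw_le_prod_Mdw1 σ f x
    _ ≤ ∏ i, nLp (p i) (σ i) (Mdw1 (σ i) (f i)) :=
        lintegral_prod_rpow_mul_le (fun i => (measurable_Mdw1 (hσ0 i) (hσm i)).aemeasurable)
          (fun i => (hσm i).ennreal_ofReal.aemeasurable) hp0 hpp0 hpp
    _ ≤ ∏ i, ENNReal.ofReal (conjExp (p i)) * nLpR (p i) (σ i) (f i) :=
        Finset.prod_le_prod' fun i _ => nLp_Mdw1_le (hσ0 i) (hσm i) (hfm i) (hp i)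

/-- Universal bound `‖𝓜^d_{⃗σ}(⃗f)‖_{L^p(ν_{⃗σ})} ≤ ∏ p_i' ‖f_i‖_{L^{p_i}(σ_i)}`. -/
theorem stmt3 {n m : ℕ} (hm : 0 < m) (p : Fin m → ℝ) (pp : ℝ)
    (hp : ∀ i, 1 < p i) (hpp : 1 / pp = ∑ i, 1 / p i)
    (σ : Fin m → Rn n → ℝ) (hσ0 : ∀ i x, 0 ≤ σ i x) (hσm : ∀ i, Measurable (σ i))
    (f : Fin m → Rn n → ℝ) (hf0 : ∀ i x, 0 ≤ f i x) (hfm : ∀ i, Measurable (f i)) :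
    nLp pp (fun x => ∏ i, σ i x ^ (pp / p i)) (Mdw σ f) ≤
      ∏ i, ENNReal.ofReal (conjExp (p i)) * nLpR (p i) (σ i) (f i) :=
  stmt3_general hm p pp hp hpp σ hσ0 hσm f hfm
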